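/- Let q ≥ 1 and n₁,…,n_q be positive integers, and let P be the polynomial ring over 𝔽₂ = ℤ/2 in the indeterminates β_i^{(p)} for 1 ≤ p ≤ q and 1 ≤ i ≤ ⌊n_p/2⌋. With the conventions β_0^{(p)} := 1, β_i^{(p)} := β_{n_p−i}^{(p)} for ⌊n_p/2⌋ < i ≤ n_p, and β_i^{(p)} := 0 for i < 0 or i > n_p, define μ_m := Σ_{a₁+⋯+a_q = m} β_{a₁}^{(1)}⋯β_{a_q}^{(q)} ∈ P and set N := n₁ + ⋯ + n_q. If the number k of indices p with n_p odd is odd and k ≥ 3, then Σ_{m=0}^{⌊N/2⌋} μ_m = 0 in P. -/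

import Mathlib

open MvPolynomial

/-- A sequence (given as a list) `a₁, …, aₙ` in a commutative ring `A` is `A`-regular if for
each `i`, `aᵢ` is not a zero divisor on `A ⧸ (a₁, …, a_{i-1})`. -/
def IsRegularSeq {A : Type*} [CommRing A] (l : List A) : Prop :=
  ∀ (i : ℕ) (h : i < l.length), ∀ x : A,
    l.get ⟨i, h⟩ * x ∈ Ideal.span {y | y ∈ l.take i} →
      x ∈ Ideal.span {y | y ∈ l.take i}

/-- The element `β_i^{(p)}` of the polynomial ring `P` over `𝔽₂` in the indeterminates
`β_i^{(p)}`, `1 ≤ p ≤ q`, `1 ≤ i ≤ ⌊n_p/2⌋`, with the conventions `β_0^{(p)} = 1`,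
`β_i^{(p)} = β_{n_p−i}^{(p)}` for `⌊n_p/2⌋ < i ≤ n_p`, and `β_i^{(p)} = 0` for `i > n_p`. -/
noncomputable def bb (q : ℕ) (n : Fin q → ℕ) (p : Fin q) (i : ℕ) :
    MvPolynomial (Σ p : Fin q, Fin (n p / 2)) (ZMod 2) :=
  if h : i ≤ n p then
    (if h1 : 1 ≤ min i (n p - i) then X ⟨p, ⟨min i (n p - i) - 1, by omega⟩⟩ else 1)
  else 0

/-- `μ_m := Σ_{a₁+⋯+a_q = m} β_{a₁}^{(1)} ⋯ β_{a_q}^{(q)}`. -/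
noncomputable def muP (q : ℕ) (n : Fin q → ℕ) (m : ℕ) :
    MvPolynomial (Σ p : Fin q, Fin (n p / 2)) (ZMod 2) :=
  ∑ a ∈ (Fintype.piFinset fun _ : Fin q => Finset.range (m + 1)).filter
      (fun a => ∑ p, a p = m),
    ∏ p, bb q n p (a p)

/-- `μ̃_m := μ_m + (binom(n₁+⋯+n_q, m) mod 2)`. -/
noncomputable def muTildeP (q : ℕ) (n : Fin q → ℕ) (m : ℕ) :
    MvPolynomial (Σ p : Fin q, Fin (n p / 2)) (ZMod 2) :=
  muP q n m + (Nat.choose (∑ p, n p) m : MvPolynomial (Σ p : Fin q, Fin (n p / 2)) (ZMod 2))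

/-! Terms with some `a_p > n_p` vanish and `β_i^{(p)} = β_{min(i, n_p - i)}^{(p)}`, so the sum runs
over the tuples `a` of the box `∏ [0, n_p]` with `Σ a ≤ ⌊N/2⌋`, and each term depends only on the
folded tuple `b = (min(a_p, n_p - a_p))_p`. The tuples with a given fold `b` form the box
`∏ {b_p, n_p - b_p}`, whose size is divisible by `4` since at least two `n_p` are odd. As `N` is odd,
the reflection `a ↦ n - a` exchanges the tuples with `Σ a ≤ ⌊N/2⌋` and those with `Σ a > ⌊N/2⌋`, so
an even number of them contribute and the terms cancel over `𝔽₂`. -/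

open Finset

theorem Finset.two_mul_card_filter_of_involution {α : Type*} (s : Finset α) (P : α → Prop)
    [DecidablePred P] (σ : α → α) (hσ : ∀ a ∈ s, σ a ∈ s) (hσσ : ∀ a ∈ s, σ (σ a) = a)
    (hP : ∀ a ∈ s, P (σ a) ↔ ¬ P a) :
    2 * (s.filter P).card = s.card := by
  have hswap : (s.filter P).card = (s.filter fun a => ¬ P a).card := by
    refine card_nbij' σ σ (fun a ha => ?_) (fun a ha => ?_) (fun a ha => hσσ a (mem_filter.1 ha).1)
      (fun a ha => hσσ a (mem_filter.1 ha).1)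
    · obtain ⟨has, hPa⟩ := mem_filter.1 ha
      exact mem_filter.2 ⟨hσ a has, by rwa [hP a has, not_not]⟩
    · obtain ⟨has, hPa⟩ := mem_filter.1 ha
      exact mem_filter.2 ⟨hσ a has, (hP a has).2 hPa⟩
  have := card_filter_add_card_filter_not (s := s) P
  omega

theorem Finset.sum_comp_eq_zero_of_even_card_fiber {α β R : Type*} [DecidableEq β]
    [NonAssocSemiring R] [CharP R 2] (s : Finset α) (φ : α → β) (g : β → R)
    (heven : ∀ a ∈ s, Even (s.filter fun a' => φ a' = φ a).card) :
    ∑ a ∈ s, g (φ a) = 0 := by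
  rw [sum_comp]
  refine sum_eq_zero fun b hb => ?_
  obtain ⟨a, ha, rfl⟩ := mem_image.1 hb
  rw [nsmul_eq_mul, (CharP.cast_eq_zero_iff R 2 _).2 (heven a ha).two_dvd, zero_mul]

section Fold

variable {ι : Type*}

def foldTuple (n a : ι → ℕ) : ι → ℕ := fun p => min (a p) (n p - a p)

theorem two_mul_foldTuple_le (n a : ι → ℕ) (p : ι) : 2 * foldTuple n a p ≤ n p := by
  simp only [foldTuple]
  omega

variable [Fintype ι] [DecidableEq ι]

theorem filter_foldTuple_eq_piFinset (n b : ι → ℕ) (hb : ∀ p, 2 * b p ≤ n p) :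
    (Fintype.piFinset fun p => range (n p + 1)).filter (fun a => foldTuple n a = b)
      = Fintype.piFinset fun p => {b p, n p - b p} := by
  ext a
  simp only [mem_filter, Fintype.mem_piFinset, mem_range, mem_insert, mem_singleton,
    funext_iff, foldTuple, ← forall_and]
  refine forall_congr' fun p => ?_
  have := hb p
  omega

theorem four_dvd_card_piFinset_pair (n b : ι → ℕ) (hb : ∀ p, 2 * b p ≤ n p)
    (hodd : 2 ≤ (univ.filter fun p => Odd (n p)).card) :
    4 ∣ (Fintype.piFinset fun p => ({b p, n p - b p} : Finset ℕ)).card := by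
  have hpair : ∀ p, Odd (n p) → ({b p, n p - b p} : Finset ℕ).card = 2 := fun p hp =>
    card_pair fun h => by obtain ⟨c, hc⟩ := hp; have := hb p; omega
  rw [Fintype.card_piFinset, ← prod_filter_mul_prod_filter_not univ fun p => Odd (n p),
    prod_congr rfl fun p hp => hpair p (mem_filter.1 hp).2, prod_const]
  exact (pow_dvd_pow 2 hodd).mul_right _

theorem two_mul_card_filter_sum_le_piFinset_pair (n b : ι → ℕ) (hb : ∀ p, 2 * b p ≤ n p) (M : ℕ)
    (hN : ∑ p, n p = 2 * M + 1) :
    2 * ((Fintype.piFinset fun p => ({b p, n p - b p} : Finset ℕ)).filter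
        fun a => ∑ p, a p ≤ M).card
      = (Fintype.piFinset fun p => ({b p, n p - b p} : Finset ℕ)).card := by
  have hmem : ∀ a ∈ Fintype.piFinset fun p => ({b p, n p - b p} : Finset ℕ),
      ∀ p, a p = b p ∨ a p = n p - b p := fun a ha p => by
    simpa using Fintype.mem_piFinset.1 ha p
  have hle : ∀ a ∈ Fintype.piFinset fun p => ({b p, n p - b p} : Finset ℕ), ∀ p, a p ≤ n p :=
    fun a ha p => by have := hb p; rcases hmem a ha p with h | h <;> omega
  refine two_mul_card_filter_of_involution _ _ (fun a p => n p - a p) (fun a ha => ?_)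
    (fun a ha => funext fun p => show n p - (n p - a p) = a p by have := hle a ha p; omega)
    (fun a ha => ?_)
  · refine Fintype.mem_piFinset.2 fun p => ?_
    have := hb p
    rcases hmem a ha p with h | h <;> simp only [mem_insert, mem_singleton] <;> omega
  · have hsum : ∑ p, (n p - a p) + ∑ p, a p = 2 * M + 1 := by
      rw [← sum_add_distrib, ← hN]
      exact sum_congr rfl fun p _ => by have := hle a ha p; omega
    simp only
    omega

end Fold

theorem bb_eq_zero (q : ℕ) (n : Fin q → ℕ) (p : Fin q) (i : ℕ) (h : n p < i) :
    bb q n p i = 0 := by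
  rw [bb, dif_neg (by omega)]

theorem bb_min (q : ℕ) (n : Fin q → ℕ) (p : Fin q) (i : ℕ) (h : i ≤ n p) :
    bb q n p i = bb q n p (min i (n p - i)) := by
  have hfold : min (min i (n p - i)) (n p - min i (n p - i)) = min i (n p - i) := by omega
  rw [bb, bb, dif_pos h, dif_pos (show min i (n p - i) ≤ n p by omega)]
  simp only [hfold]

theorem muP_eq_sum_filter_piFinset (q : ℕ) (n : Fin q → ℕ) (m : ℕ) :
    muP q n m = ∑ a ∈ (Fintype.piFinset fun p => range (n p + 1)).filter
      (fun a => ∑ p, a p = m), ∏ p, bb q n p (a p) := by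
  refine (sum_subset (fun a ha => ?_) (fun a ha hna => ?_)).symm
  · obtain ⟨-, hsum⟩ := mem_filter.1 ha
    refine mem_filter.2 ⟨Fintype.mem_piFinset.2 fun p => mem_range.2 ?_, hsum⟩
    have := single_le_sum (fun p _ => Nat.zero_le (a p)) (mem_univ p)
    omega
  · obtain ⟨-, hsum⟩ := mem_filter.1 ha
    obtain ⟨p, hp⟩ : ∃ p, n p < a p := by
      by_contra! h
      exact hna (mem_filter.2 ⟨Fintype.mem_piFinset.2 fun p => mem_range.2 (by
        have := h p; omega), hsum⟩)
    exact prod_eq_zero (mem_univ p) (bb_eq_zero q n p _ hp)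

theorem sum_range_muP (q : ℕ) (n : Fin q → ℕ) (M : ℕ) :
    ∑ m ∈ range (M + 1), muP q n m
      = ∑ a ∈ (Fintype.piFinset fun p => range (n p + 1)).filter (fun a => ∑ p, a p ≤ M),
          ∏ p, bb q n p (a p) := by
  rw [← sum_fiberwise_of_maps_to (g := fun a : Fin q → ℕ => ∑ p, a p) (t := range (M + 1))
    fun a ha => mem_range.2 (Nat.lt_succ_of_le (mem_filter.1 ha).2)]
  refine sum_congr rfl fun m hm => ?_
  rw [muP_eq_sum_filter_piFinset, filter_filter]
  refine sum_congr (filter_congr fun a _ => ?_) fun _ _ => rfl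
  have := mem_range.1 hm
  exact ⟨fun h => ⟨by omega, h⟩, And.right⟩

theorem stmt_13 (q : ℕ) (n : Fin q → ℕ)
    (hk : Odd (Finset.univ.filter fun p => Odd (n p)).card)
    (hk3 : 3 ≤ (Finset.univ.filter fun p => Odd (n p)).card) :
    ∑ m ∈ Finset.range ((∑ p, n p) / 2 + 1), muP q n m = 0 := by
  obtain ⟨M, hM⟩ := (odd_sum_iff_odd_card_odd n).2 hk
  rw [show (∑ p, n p) / 2 = M by omega, sum_range_muP]
  set S := (Fintype.piFinset fun p => range (n p + 1)).filter fun a => ∑ p, a p ≤ M with hS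
  calc ∑ a ∈ S, ∏ p, bb q n p (a p) = ∑ a ∈ S, ∏ p, bb q n p (foldTuple n a p) :=
        sum_congr rfl fun a ha => prod_congr rfl fun p _ =>
          bb_min q n p (a p) (Nat.lt_succ_iff.1 (mem_range.1
            (Fintype.mem_piFinset.1 (mem_filter.1 ha).1 p)))
    _ = 0 := sum_comp_eq_zero_of_even_card_fiber S (foldTuple n)
        (fun b => ∏ p, bb q n p (b p)) fun a _ => ?_
  have hb := two_mul_foldTuple_le n a
  rw [hS, filter_comm, filter_foldTuple_eq_piFinset n _ hb, Nat.even_iff]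
  have h2 := two_mul_card_filter_sum_le_piFinset_pair n _ hb M hM
  have h4 := four_dvd_card_piFinset_pair n _ hb (by omega)
  omega
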